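/- For every integer N ≥ 4, the real sequence t_k := 1 − 4·(5/2)^{N−2}·(2/5)^{k−1} + 3·5^{N−2}·(1/5)^{k−1} (k ≥ 1), which is the impulse response of H^N(z) = 1/(z−1) − 4(5/2)^{N−2}/(z−0.4) + 3·5^{N−2}/(z−0.2), admits a positive realization of dimension N. -/

import Mathlib

open Matrix

/-- A positive realization of dimension `M` of a real sequence `t` (relevant for `k ≥ 1`):
a triple `(A, b, c)` with all entries nonnegative such that `t k = cᵀ A^(k-1) b` for `k ≥ 1`. -/
def IsPosRealization (M : ℕ) (A : Matrix (Fin M) (Fin M) ℝ)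
    (b c : Fin M → ℝ) (t : ℕ → ℝ) : Prop :=
  (∀ i j, 0 ≤ A i j) ∧ (∀ i, 0 ≤ b i) ∧ (∀ i, 0 ≤ c i) ∧
    ∀ k : ℕ, 1 ≤ k → t k = c ⬝ᵥ (A ^ (k - 1)).mulVec b

/-! For `N = 4` the realization comes from an invariant cone: the columns of `baseCone` span a
cone in `ℝ³` that `diag(1, 2/5, 1/5)` maps into itself, and `baseMatrix` holds the nonnegative
coordinates of the images of the generators, which is the identity
`baseCone * baseMatrix = diag(1, 2/5, 1/5) * baseCone`. Observing through `baseCone` turns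
`cᵀ Aᵏ b` into the modal sum `1 - 25 (2/5)ᵏ + 75 (1/5)ᵏ`.

The sequence for `N + 1` is the sequence for `N` delayed by one step, preceded by the
nonnegative term `1 - 4 (5/2)^(N-1) + 3 · 5^(N-1)`; prepending a delay state to a positive
realization realizes the delayed sequence in one more dimension. -/

section Delay

variable {R : Type*} [CommSemiring R] {M : ℕ}

def delayMatrix (A : Matrix (Fin M) (Fin M) R) (b : Fin M → R) :
    Matrix (Fin (M + 1)) (Fin (M + 1)) R :=
  Matrix.of (vecCons 0 fun i => vecCons (b i) (A i))

lemma delayMatrix_mulVec_cons (A : Matrix (Fin M) (Fin M) R) (b : Fin M → R) (x : R)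
    (v : Fin M → R) : delayMatrix A b *ᵥ vecCons x v = vecCons 0 (x • b + A *ᵥ v) := by
  ext i
  refine Fin.cases ?_ (fun i => ?_) i
  · simp [delayMatrix, mulVec]
  · simp [delayMatrix, mulVec, mul_comm]

lemma delayMatrix_pow_succ_mulVec (A : Matrix (Fin M) (Fin M) R) (b : Fin M → R) (j : ℕ) :
    delayMatrix A b ^ (j + 1) *ᵥ vecCons 1 0 = vecCons 0 (A ^ j *ᵥ b) := by
  induction j with
  | zero => simp [delayMatrix_mulVec_cons]
  | succ j ih => rw [pow_succ', ← mulVec_mulVec, ih, delayMatrix_mulVec_cons, pow_succ',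
      ← mulVec_mulVec, zero_smul, zero_add]

end Delay

namespace IsPosRealization

variable {M : ℕ} {A : Matrix (Fin M) (Fin M) ℝ} {b c : Fin M → ℝ} {t : ℕ → ℝ}

lemma congr (h : IsPosRealization M A b c t) {s : ℕ → ℝ} (hst : ∀ k, 1 ≤ k → s k = t k) :
    IsPosRealization M A b c s :=
  ⟨h.1, h.2.1, h.2.2.1, fun k hk => (hst k hk).trans (h.2.2.2 k hk)⟩

lemma delay (h : IsPosRealization M A b c t) {s : ℕ → ℝ} (hs₁ : 0 ≤ s 1)
    (hs : ∀ k, 1 ≤ k → s (k + 1) = t k) :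
    IsPosRealization (M + 1) (delayMatrix A b) (vecCons 1 0) (vecCons (s 1) c) s := by
  obtain ⟨hA, hb, hc, ht⟩ := h
  refine ⟨fun i j => ?_, fun i => ?_, fun i => ?_, fun k hk => ?_⟩
  · exact Fin.cases le_rfl (fun i => Fin.cases (hb i) (hA i) j) i
  · exact Fin.cases zero_le_one (fun _ => le_rfl) i
  · exact Fin.cases hs₁ hc i
  · match k, hk with
    | 1, _ => simp
    | k + 2, _ =>
      rw [hs _ le_add_self, ht _ le_add_self, show k + 2 - 1 = k + 1 from rfl,
        delayMatrix_pow_succ_mulVec, cons_dotProduct_cons]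
      simp

end IsPosRealization

lemma dotProduct_pow_mulVec_of_mul_eq_mul {R m n : Type*} [CommSemiring R] [Fintype m]
    [Fintype n] [DecidableEq m] [DecidableEq n] {V : Matrix m n R} {A : Matrix n n R}
    {F : Matrix m m R} (hVA : V * A = F * V) (w : m → R) (b : n → R) (j : ℕ) :
    (w ᵥ* V) ⬝ᵥ (A ^ j *ᵥ b) = w ⬝ᵥ (F ^ j *ᵥ (V *ᵥ b)) := by
  have hpow : V * A ^ j = F ^ j * V := by
    induction j with
    | zero => simp
    | succ j ih => rw [pow_succ, ← Matrix.mul_assoc, ih, Matrix.mul_assoc, hVA,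
        ← Matrix.mul_assoc, ← pow_succ]
  rw [← dotProduct_mulVec, mulVec_mulVec, hpow, ← mulVec_mulVec]

noncomputable def hnResponse (N k : ℕ) : ℝ :=
  1 - 4 * (5 / 2 : ℝ) ^ (N - 2) * (2 / 5 : ℝ) ^ (k - 1)
    + 3 * (5 : ℝ) ^ (N - 2) * (1 / 5 : ℝ) ^ (k - 1)

lemma hnResponse_succ_succ {N : ℕ} (hN : 2 ≤ N) {k : ℕ} (hk : 1 ≤ k) :
    hnResponse (N + 1) (k + 1) = hnResponse N k := by
  obtain ⟨m, rfl⟩ := Nat.exists_eq_add_of_le hN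
  obtain ⟨k, rfl⟩ := Nat.exists_eq_add_of_le hk
  simp only [hnResponse, Nat.add_sub_cancel_left, show 2 + m + 1 - 2 = m + 1 by omega,
    show 1 + k + 1 - 1 = k + 1 by omega]
  ring

lemma hnResponse_one_nonneg (N : ℕ) : 0 ≤ hnResponse N 1 := by
  simp only [hnResponse, Nat.sub_self, pow_zero, mul_one]
  rcases Nat.eq_zero_or_pos (N - 2) with hm | hm
  · norm_num [hm]
  · have h5 : (5 : ℝ) ^ (N - 2) = (5 / 2) ^ (N - 2) * 2 ^ (N - 2) := by
      rw [← mul_pow]; norm_num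
    have h2 : (2 : ℝ) ≤ 2 ^ (N - 2) := le_self_pow₀ one_le_two hm.ne'
    nlinarith [pow_pos (by norm_num : (0 : ℝ) < 5 / 2) (N - 2)]

noncomputable def baseMatrix : Matrix (Fin 4) (Fin 4) ℝ :=
  !![0, 0, 0, 7/8;
     1, 0, 0, 1/16;
     0, 1, 11/15, 85/16;
     0, 0, 4/375, 3/4]

noncomputable def baseCone : Matrix (Fin 3) (Fin 4) ℝ :=
  !![1, 1,   1,    25;
     1, 2/5, 4/25, -5;
     1, 1/5, 1/25, -2]

lemma baseCone_mul_baseMatrix :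
    baseCone * baseMatrix = diagonal (![1, 2/5, 1/5] : Fin 3 → ℝ) * baseCone := by
  ext i j
  fin_cases i <;> fin_cases j <;>
    norm_num [baseCone, baseMatrix, mul_apply, Fin.sum_univ_four, Fin.sum_univ_three,
      cons_val_two, cons_val_three, diagonal_apply]

lemma baseMatrix_nonneg (i j : Fin 4) : 0 ≤ baseMatrix i j := by
  fin_cases i <;> fin_cases j <;> norm_num [baseMatrix]

lemma isPosRealization_hnResponse_four :
    IsPosRealization 4 baseMatrix ![1, 0, 0, 0] ![51, 6, 0, 0] (hnResponse 4) := by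
  have hc : ![51, 6, 0, 0] = ![1, -25, 75] ᵥ* baseCone := by
    ext i
    fin_cases i <;> norm_num [baseCone, vecMul, dotProduct, Fin.sum_univ_three, cons_val_two]
  have hb : baseCone *ᵥ ![1, 0, 0, 0] = ![1, 1, 1] := by
    ext i; fin_cases i <;> simp [baseCone, mulVec, dotProduct, Fin.sum_univ_four]
  refine ⟨baseMatrix_nonneg, fun i => ?_, fun i => ?_, fun k hk => ?_⟩
  · fin_cases i <;> norm_num
  · fin_cases i <;> norm_num
  · rw [hc, dotProduct_pow_mulVec_of_mul_eq_mul baseCone_mul_baseMatrix, hb, diagonal_pow]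
    simp only [hnResponse, Nat.reduceSub, one_div, inv_pow, dotProduct, mulVec_diagonal,
      Pi.pow_apply, Fin.sum_univ_three, cons_val_zero, one_pow, mul_one, cons_val_one, cons_val]
    ring

lemma exists_isPosRealization_hnResponse {N : ℕ} (hN : 4 ≤ N) :
    ∃ (A : Matrix (Fin N) (Fin N) ℝ) (b c : Fin N → ℝ),
      IsPosRealization N A b c (hnResponse N) := by
  induction N, hN using Nat.le_induction with
  | base => exact ⟨_, _, _, isPosRealization_hnResponse_four⟩
  | succ N hN ih =>
    obtain ⟨A, b, c, h⟩ := ih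
    exact ⟨_, _, _, h.delay (hnResponse_one_nonneg _)
      fun k hk => hnResponse_succ_succ (by omega) hk⟩

theorem HN_has_N_dimensional_positive_realization
    (N : ℕ) (hN : 4 ≤ N) (t : ℕ → ℝ)
    (ht : ∀ k : ℕ, 1 ≤ k →
      t k = 1 - 4 * (5 / 2 : ℝ) ^ (N - 2) * (2 / 5 : ℝ) ^ (k - 1)
              + 3 * (5 : ℝ) ^ (N - 2) * (1 / 5 : ℝ) ^ (k - 1)) :
    ∃ (A : Matrix (Fin N) (Fin N) ℝ) (b c : Fin N → ℝ),
      IsPosRealization N A b c t := by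
  obtain ⟨A, b, c, h⟩ := exists_isPosRealization_hnResponse hN
  exact ⟨A, b, c, h.congr ht⟩
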